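/- Let (Ω, μ) be a finite measure space with μ(Ω) > 0, d ≥ 1, r ≥ 2, and s = r/(r−1). Let Ψ : [0,∞) → ℝ be continuous, convex, nondecreasing on [0,∞) and strictly increasing on (0,∞), and suppose there exist constants c₀, C₀, C₁ > 0 such that c₀·a^{r/2} − C₀ ≤ Ψ(a) ≤ C₁(1 + a^{r/2}) for all a ≥ 0. Let û ∈ Lʳ(μ; ℝᵈ), f₀ ∈ Lˢ(μ; ℝᵈ), and let V be a closed linear subspace of Lʳ(μ; ℝᵈ). Define the energy E(v) = ∫_Ω Ψ(‖v + û‖²) dμ − ∫_Ω f₀·(v + û) dμ for v ∈ V. Then E admits a unique global minimizer on V. -/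

import Mathlib

/-!
The energy is convex on `Lʳ`, bounded above near `0` (hence continuous) and bounded below, by the
growth bounds on `Ψ` and Young's inequality. It is moreover uniformly convex in the midpoint
sense: convexity of `Ψ` and the parallelogram law give pointwise
`Ψ(|(ξ+ζ)/2|²) + Ψ(|(ξ-ζ)/2|²) ≤ (Ψ(|ξ|²) + Ψ(|ζ|²))/2 + Ψ(0)`, while the coercivity and strict
monotonicity of `Ψ` bound `∫ (Ψ(|u|²) - Ψ(0))` below by a positive constant once `‖u‖` stays
away from `0`. Hence a minimizing sequence in the closed subspace is Cauchy, its limit is a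
minimizer, and two distinct minimizers would have a midpoint of strictly smaller energy.
-/

open Set MeasureTheory
open scoped RealInnerProductSpace

open Filter Topology

theorem ConvexOn.add_le_map_add_add_map_zero {Ψ : ℝ → ℝ} (hΨ : ConvexOn ℝ (Ici 0) Ψ)
    {a b : ℝ} (ha : 0 ≤ a) (hb : 0 ≤ b) : Ψ a + Ψ b ≤ Ψ (a + b) + Ψ 0 := by
  rcases (add_nonneg ha hb).eq_or_lt with hab | hab
  · obtain rfl : a = 0 := by linarith
    obtain rfl : b = 0 := by linarith
    simp
  have hcomb (x y : ℝ) (hx : 0 ≤ x) (hy : 0 ≤ y) (hxy : x + y = a + b) :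
      Ψ x ≤ x / (a + b) * Ψ (a + b) + y / (a + b) * Ψ 0 := by
    have := hΨ.2 (mem_Ici.2 hab.le) (mem_Ici.2 le_rfl) (div_nonneg hx hab.le)
      (div_nonneg hy hab.le) (by field_simp; linarith)
    simpa [smul_eq_mul, div_mul_cancel₀ _ hab.ne'] using this
  have h₁ := hcomb a b ha hb rfl
  have h₂ := hcomb b a hb ha (add_comm b a)
  have hsum : a / (a + b) + b / (a + b) = 1 := by field_simp
  linear_combination h₁ + h₂ + (Ψ (a + b) + Ψ 0) * hsum

theorem exists_pos_mul_rpow_sub_le_sub_map_zero {Ψ : ℝ → ℝ} {p c C : ℝ} (hp : 0 < p)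
    (hΨmono : MonotoneOn Ψ (Ici 0)) (hΨstrict : StrictMonoOn Ψ (Ioi 0)) (hc : 0 < c)
    (hlow : ∀ a, 0 ≤ a → c * a ^ p - C ≤ Ψ a) {β : ℝ} (hβ : 0 < β) :
    ∃ θ > 0, ∀ a, 0 ≤ a → θ * (a ^ p - β) ≤ Ψ a - Ψ 0 := by
  set η := β ^ p⁻¹
  have hη : 0 < η := Real.rpow_pos_of_pos hβ _
  have hηp : η ^ p = β := Real.rpow_inv_rpow hβ.le hp.ne'
  have hκ : 0 < Ψ η - Ψ 0 := by
    have h₁ := hΨmono (mem_Ici.2 le_rfl) (mem_Ici.2 (half_pos hη).le) (half_pos hη).le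
    have h₂ := hΨstrict (mem_Ioi.2 (half_pos hη)) (mem_Ioi.2 hη) (half_lt_self hη)
    linarith
  -- Where `a ^ p ≤ β` the left side is `≤ 0`; beyond, `Ψ a - Ψ 0 ≥ Ψ η - Ψ 0 > 0` covers
  -- `a ^ p ≤ B`, and the coercive bound covers `a ^ p > B`.
  set B := max 1 (2 * (C + Ψ 0) / c)
  have hB : 0 < B := lt_max_of_lt_left one_pos
  refine ⟨min (c / 2) ((Ψ η - Ψ 0) / B), by positivity, fun a ha ↦ ?_⟩
  set θ := min (c / 2) ((Ψ η - Ψ 0) / B)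
  have hθ : 0 < θ := by positivity
  have hap : 0 ≤ a ^ p := Real.rpow_nonneg ha p
  rcases le_or_gt (a ^ p) β with hsmall | hlarge
  · have := hΨmono (mem_Ici.2 le_rfl) (mem_Ici.2 ha) ha
    nlinarith
  have hθa : θ * (a ^ p - β) ≤ θ * a ^ p := by nlinarith
  rcases le_or_gt (a ^ p) B with hmid | hbig
  · have hηa : η ≤ a := by
      rw [← hηp] at hlarge
      exact ((Real.rpow_lt_rpow_iff hη.le ha hp).1 hlarge).le
    have hκa := hΨmono (mem_Ici.2 hη.le) (mem_Ici.2 ha) hηa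
    calc θ * (a ^ p - β) ≤ (Ψ η - Ψ 0) / B * B :=
          hθa.trans (mul_le_mul (min_le_right _ _) hmid hap (by positivity))
      _ ≤ Ψ a - Ψ 0 := by rw [div_mul_cancel₀ _ hB.ne']; linarith
  · have hC : 2 * (C + Ψ 0) / c < a ^ p := (le_max_right _ _).trans_lt hbig
    rw [div_lt_iff₀ hc] at hC
    have := hlow a ha
    calc θ * (a ^ p - β) ≤ c / 2 * a ^ p :=
          hθa.trans (mul_le_mul_of_nonneg_right (min_le_left _ _) hap)
      _ ≤ Ψ a - Ψ 0 := by nlinarith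

theorem Real.exists_mul_le_mul_rpow_add_mul_rpow {r s : ℝ} (hsr : s.HolderConjugate r) {c : ℝ}
    (hc : 0 < c) : ∃ K, ∀ a b : ℝ, 0 ≤ a → 0 ≤ b → a * b ≤ c * a ^ r + K * b ^ s := by
  set l := (c * r) ^ r⁻¹
  have hr := hsr.symm.pos
  have hl : 0 < l := by positivity
  have hlr : l ^ r = c * r := Real.rpow_inv_rpow (by positivity) hr.ne'
  refine ⟨(l ^ s)⁻¹ / s, fun a b ha hb ↦ ?_⟩
  have young := Real.young_inequality_of_nonneg (mul_nonneg hl.le ha) (div_nonneg hb hl.le) hsr.symm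
  rw [Real.mul_rpow hl.le ha, Real.div_rpow hb hl.le, hlr] at young
  calc a * b = l * a * (b / l) := by field_simp
    _ ≤ c * a ^ r + (l ^ s)⁻¹ / s * b ^ s := by
      convert young using 2 <;> field_simp

theorem Real.sq_rpow_half {x : ℝ} (hx : 0 ≤ x) (r : ℝ) : (x ^ 2) ^ (r / 2) = x ^ r := by
  rw [Real.rpow_div_two_eq_sqrt _ (sq_nonneg x), Real.sqrt_sq hx]

section InnerProductSpace

variable {E : Type*} [NormedAddCommGroup E] [InnerProductSpace ℝ E]

/-- A Clarkson-type inequality: by the parallelogram law, the squared norms of the half sum and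
the half difference add up to `(‖x‖² + ‖y‖²) / 2`. -/
theorem ConvexOn.clarkson_norm_sq {Ψ : ℝ → ℝ} (hΨ : ConvexOn ℝ (Ici 0) Ψ) (x y : E) :
    Ψ (‖(2⁻¹ : ℝ) • (x + y)‖ ^ 2) + Ψ (‖(2⁻¹ : ℝ) • (x - y)‖ ^ 2) ≤
      (Ψ (‖x‖ ^ 2) + Ψ (‖y‖ ^ 2)) / 2 + Ψ 0 := by
  have hsplit : ‖(2⁻¹ : ℝ) • (x + y)‖ ^ 2 + ‖(2⁻¹ : ℝ) • (x - y)‖ ^ 2 =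
      2⁻¹ * ‖x‖ ^ 2 + 2⁻¹ * ‖y‖ ^ 2 := by
    have := parallelogram_law_with_norm ℝ x y
    simp only [norm_smul, Real.norm_of_nonneg (by norm_num : (0 : ℝ) ≤ 2⁻¹)]
    linear_combination this / 4
  have hmid := hΨ.2 (mem_Ici.2 (sq_nonneg ‖x‖)) (mem_Ici.2 (sq_nonneg ‖y‖))
    (by norm_num : (0 : ℝ) ≤ 2⁻¹) (by norm_num : (0 : ℝ) ≤ 2⁻¹) (by norm_num)
  have hsup := hΨ.add_le_map_add_add_map_zero (sq_nonneg ‖(2⁻¹ : ℝ) • (x + y)‖)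
    (sq_nonneg ‖(2⁻¹ : ℝ) • (x - y)‖)
  rw [hsplit] at hsup
  simp only [smul_eq_mul] at hmid
  linarith

theorem ConvexOn.comp_norm_sq {Ψ : ℝ → ℝ} (hΨ : ConvexOn ℝ (Ici 0) Ψ)
    (hΨmono : MonotoneOn Ψ (Ici 0)) : ConvexOn ℝ univ (fun x : E ↦ Ψ (‖x‖ ^ 2)) := by
  have hsq : ConvexOn ℝ univ (fun x : E ↦ ‖x‖ ^ 2) :=
    (convexOn_norm convex_univ).pow (fun x _ ↦ norm_nonneg x) 2
  refine ⟨convex_univ, fun x _ y _ a b ha hb hab ↦ ?_⟩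
  calc Ψ (‖a • x + b • y‖ ^ 2) ≤ Ψ (a • ‖x‖ ^ 2 + b • ‖y‖ ^ 2) :=
        hΨmono (mem_Ici.2 (sq_nonneg _)) (mem_Ici.2 (by positivity))
          (hsq.2 trivial trivial ha hb hab)
    _ ≤ a • Ψ (‖x‖ ^ 2) + b • Ψ (‖y‖ ^ 2) :=
        hΨ.2 (mem_Ici.2 (sq_nonneg _)) (mem_Ici.2 (sq_nonneg _)) ha hb hab

end InnerProductSpace

section Minimization

variable {X : Type*} [NormedAddCommGroup X] [NormedSpace ℝ X] {K : Set X} {J : X → ℝ}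

theorem Convex.inv_two_smul_add_mem (hK : Convex ℝ K) {v w : X} (hv : v ∈ K) (hw : w ∈ K) :
    (2⁻¹ : ℝ) • (v + w) ∈ K := by
  rw [smul_add]
  exact hK hv hw (by norm_num) (by norm_num) (by norm_num)

theorem cauchySeq_of_tendsto_sInf_of_uniform_midpoint (hK : Convex ℝ K)
    (hbdd : BddBelow (J '' K))
    (hunif : ∀ ε > 0, ∃ ρ > 0, ∀ v ∈ K, ∀ w ∈ K, ε ≤ ‖v - w‖ →
      J ((2⁻¹ : ℝ) • (v + w)) + ρ ≤ (J v + J w) / 2)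
    {u : ℕ → X} (huK : ∀ n, u n ∈ K) (hu : Tendsto (fun n ↦ J (u n)) atTop (𝓝 (sInf (J '' K)))) :
    CauchySeq u := by
  refine Metric.cauchySeq_iff.2 fun ε hε ↦ ?_
  obtain ⟨ρ, hρ, hmid⟩ := hunif ε hε
  obtain ⟨N, hN⟩ := eventually_atTop.1
    (hu.eventually (gt_mem_nhds (lt_add_of_pos_right (sInf (J '' K)) hρ)))
  refine ⟨N, fun m hm n hn ↦ ?_⟩
  by_contra! hmn
  have hgain := hmid _ (huK m) _ (huK n) (dist_eq_norm (u m) (u n) ▸ hmn)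
  have hinf := csInf_le hbdd (mem_image_of_mem J (hK.inv_two_smul_add_mem (huK m) (huK n)))
  linarith [hN m hm, hN n hn]

theorem existsUnique_forall_le_of_uniform_midpoint [CompleteSpace X] (hKc : IsClosed K)
    (hK : Convex ℝ K) (hKne : K.Nonempty) (hJ : ContinuousOn J K) (hbdd : BddBelow (J '' K))
    (hunif : ∀ ε > 0, ∃ ρ > 0, ∀ v ∈ K, ∀ w ∈ K, ε ≤ ‖v - w‖ →
      J ((2⁻¹ : ℝ) • (v + w)) + ρ ≤ (J v + J w) / 2) :
    ∃! v, v ∈ K ∧ ∀ w ∈ K, J v ≤ J w := by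
  obtain ⟨y, -, hy, hyJ⟩ := exists_seq_tendsto_sInf (hKne.image J) hbdd
  choose u huK hu using hyJ
  have hJu : Tendsto (fun n ↦ J (u n)) atTop (𝓝 (sInf (J '' K))) := by
    rwa [show (fun n ↦ J (u n)) = y from funext hu]
  obtain ⟨v, hv⟩ := cauchySeq_tendsto_of_complete
    (cauchySeq_of_tendsto_sInf_of_uniform_midpoint hK hbdd hunif huK hJu)
  have hvK : v ∈ K := hKc.mem_of_tendsto hv (.of_forall huK)
  have hJv : J v = sInf (J '' K) :=
    tendsto_nhds_unique ((hJ v hvK).tendsto.comp (tendsto_nhdsWithin_iff.2 ⟨hv, .of_forall huK⟩))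
      hJu
  have hmin : ∀ w ∈ K, J v ≤ J w := fun w hw ↦ hJv ▸ csInf_le hbdd (mem_image_of_mem J hw)
  refine ⟨v, ⟨hvK, hmin⟩, fun v' ⟨hv'K, hv'min⟩ ↦ ?_⟩
  by_contra hne
  obtain ⟨ρ, hρ, hmid⟩ := hunif ‖v' - v‖ (norm_pos_iff.2 (sub_ne_zero.2 hne))
  have hgain := hmid v' hv'K v hvK le_rfl
  have hmid_ge := hv'min _ (hK.inv_two_smul_add_mem hv'K hvK)
  linarith [hv'min v hvK, hmin v' hv'K]

theorem ConvexOn.continuous_of_isBoundedUnder {f : X → ℝ} (hf : ConvexOn ℝ univ f) {x₀ : X}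
    (hbdd : (𝓝 x₀).IsBoundedUnder (· ≤ ·) f) : Continuous f := by
  have := (hf.continuousOn_tfae isOpen_univ univ_nonempty).out 3 1
  exact continuousOn_univ.1 (this.1 ⟨x₀, mem_univ x₀, hbdd⟩)

end Minimization

section Lebesgue

variable {Ω E : Type*} [MeasurableSpace Ω] {μ : Measure Ω} [NormedAddCommGroup E]

theorem MeasureTheory.MemLp.integrable_norm_rpow_ofReal {g : Ω → E} {r : ℝ}
    (hg : MemLp g (ENNReal.ofReal r) μ) (hr : 0 < r) : Integrable (fun x ↦ ‖g x‖ ^ r) μ := by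
  simpa [ENNReal.toReal_ofReal hr.le] using
    hg.integrable_norm_rpow (by simpa using hr) ENNReal.ofReal_ne_top

theorem MeasureTheory.Lp.integral_norm_rpow {r : ℝ} (hr : 0 < r)
    (u : Lp E (ENNReal.ofReal r) μ) : ∫ x, ‖u x‖ ^ r ∂μ = ‖u‖ ^ r := by
  rw [Lp.norm_def, toReal_eLpNorm (Lp.aestronglyMeasurable u),
    lpNorm_eq_integral_norm_rpow_toReal (by simpa using hr) ENNReal.ofReal_ne_top
      (Lp.aestronglyMeasurable u),
    ENNReal.toReal_ofReal hr.le,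
    Real.rpow_inv_rpow (integral_nonneg fun _ ↦ by positivity) hr.ne']

theorem MeasureTheory.MemLp.integrable_comp_norm_sq [IsFiniteMeasure μ] {Ψ : ℝ → ℝ}
    {r c₀ C₀ C₁ : ℝ} {g : Ω → E} (hg : MemLp g (ENNReal.ofReal r) μ) (hr : 0 < r)
    (hΨcont : ContinuousOn Ψ (Ici 0)) (hc₀ : 0 ≤ c₀)
    (hlow : ∀ a, 0 ≤ a → c₀ * a ^ (r / 2) - C₀ ≤ Ψ a)
    (hup : ∀ a, 0 ≤ a → Ψ a ≤ C₁ * (1 + a ^ (r / 2))) :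
    Integrable (fun x ↦ Ψ (‖g x‖ ^ 2)) μ := by
  have hmeas : AEStronglyMeasurable (fun x ↦ Ψ (‖g x‖ ^ 2)) μ :=
    (hΨcont.comp_continuous (continuous_norm.pow 2) fun ξ ↦ mem_Ici.2 (sq_nonneg ‖ξ‖)
      ).comp_aestronglyMeasurable hg.1
  refine ((integrable_const (|C₀| + |C₁|)).add
    ((hg.integrable_norm_rpow_ofReal hr).const_mul |C₁|)).mono' hmeas (.of_forall fun x ↦ ?_)
  have hlow' := hlow _ (sq_nonneg ‖g x‖)
  have hup' := hup _ (sq_nonneg ‖g x‖)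
  rw [Real.sq_rpow_half (norm_nonneg _)] at hlow' hup'
  have hpow : 0 ≤ ‖g x‖ ^ r := by positivity
  rw [Real.norm_eq_abs, abs_le, Pi.add_apply]
  constructor
  · linarith [le_abs_self C₀, abs_nonneg C₁, mul_nonneg hc₀ hpow, mul_nonneg (abs_nonneg C₁) hpow]
  · linarith [le_abs_self C₁, mul_le_mul_of_nonneg_right (le_abs_self C₁) hpow, abs_nonneg C₀]

theorem exists_pos_le_integral_sub_map_zero {Ψ : ℝ → ℝ} {r c₀ C₀ : ℝ} [IsFiniteMeasure μ]
    [Fact (1 ≤ ENNReal.ofReal r)] (hr : 0 < r) (hΨmono : MonotoneOn Ψ (Ici 0))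
    (hΨstrict : StrictMonoOn Ψ (Ioi 0)) (hc₀ : 0 < c₀)
    (hlow : ∀ a, 0 ≤ a → c₀ * a ^ (r / 2) - C₀ ≤ Ψ a)
    (hΨint : ∀ u : Ω → E, MemLp u (ENNReal.ofReal r) μ → Integrable (fun x ↦ Ψ (‖u x‖ ^ 2)) μ)
    {ε : ℝ} (hε : 0 < ε) :
    ∃ ρ > 0, ∀ u : Lp E (ENNReal.ofReal r) μ, ε ≤ ‖u‖ →
      ρ ≤ ∫ x, (Ψ (‖u x‖ ^ 2) - Ψ 0) ∂μ := by
  set m := μ.real univ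
  have hm : 0 ≤ m := measureReal_nonneg
  obtain ⟨θ, hθ, hgain⟩ := exists_pos_mul_rpow_sub_le_sub_map_zero (half_pos hr) hΨmono
    hΨstrict hc₀ hlow (β := ε ^ r / (2 * (m + 1))) (by positivity)
  refine ⟨θ * (ε ^ r / 2), by positivity, fun u hu ↦ ?_⟩
  have hur := (Lp.memLp u).integrable_norm_rpow_ofReal hr
  calc θ * (ε ^ r / 2) ≤ θ * (‖u‖ ^ r - ε ^ r / (2 * (m + 1)) * m) := by
        gcongr
        have : ε ^ r ≤ ‖u‖ ^ r := Real.rpow_le_rpow hε.le hu hr.le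
        have : ε ^ r / (2 * (m + 1)) * m ≤ ε ^ r / 2 := by
          rw [div_mul_eq_mul_div, div_le_div_iff₀ (by positivity) two_pos]
          nlinarith [Real.rpow_nonneg hε.le r]
        linarith
    _ = ∫ x, θ * (‖u x‖ ^ r - ε ^ r / (2 * (m + 1))) ∂μ := by
        rw [integral_const_mul, integral_sub hur (integrable_const _), integral_const,
          Lp.integral_norm_rpow hr, smul_eq_mul]
        ring
    _ ≤ ∫ x, (Ψ (‖u x‖ ^ 2) - Ψ 0) ∂μ :=
        integral_mono ((hur.sub (integrable_const _)).const_mul θ)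
          ((hΨint u (Lp.memLp u)).sub (integrable_const _)) fun x ↦ by
            simpa only [Real.sq_rpow_half (norm_nonneg _)] using hgain _ (sq_nonneg ‖u x‖)

end Lebesgue

section Energy

variable {Ω E : Type*} [MeasurableSpace Ω] {μ : Measure Ω} [NormedAddCommGroup E]
  [InnerProductSpace ℝ E] {Ψ : ℝ → ℝ} {f₀ : Ω → E} {r s : ℝ}

theorem MeasureTheory.MemLp.integrable_inner {r s : ℝ} (hsr : s.HolderConjugate r)
    {f g : Ω → E} (hf : MemLp f (ENNReal.ofReal s) μ) (hg : MemLp g (ENNReal.ofReal r) μ) :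
    Integrable (fun x ↦ ⟪f x, g x⟫) μ := by
  refine (((hf.integrable_norm_rpow_ofReal hsr.pos).div_const s).add
    ((hg.integrable_norm_rpow_ofReal hsr.symm.pos).div_const r)).mono' (hf.1.inner hg.1)
    (.of_forall fun x ↦ ?_)
  exact (abs_real_inner_le_norm _ _).trans
    (Real.young_inequality_of_nonneg (norm_nonneg _) (norm_nonneg _) hsr)

noncomputable def energy (μ : Measure Ω) (Ψ : ℝ → ℝ) (f₀ u : Ω → E) : ℝ :=
  ∫ x, (Ψ (‖u x‖ ^ 2) - ⟪f₀ x, u x⟫) ∂μ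

theorem exists_le_energy [IsFiniteMeasure μ] {c₀ C₀ : ℝ} (hsr : s.HolderConjugate r)
    (hf₀ : MemLp f₀ (ENNReal.ofReal s) μ) (hc₀ : 0 < c₀)
    (hlow : ∀ a, 0 ≤ a → c₀ * a ^ (r / 2) - C₀ ≤ Ψ a)
    (hΨint : ∀ u : Ω → E, MemLp u (ENNReal.ofReal r) μ → Integrable (fun x ↦ Ψ (‖u x‖ ^ 2)) μ)
    (hinner : ∀ u : Ω → E, MemLp u (ENNReal.ofReal r) μ → Integrable (fun x ↦ ⟪f₀ x, u x⟫) μ) :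
    ∃ C, ∀ u : Ω → E, MemLp u (ENNReal.ofReal r) μ → C ≤ energy μ Ψ f₀ u := by
  obtain ⟨K, hK⟩ := Real.exists_mul_le_mul_rpow_add_mul_rpow hsr hc₀
  refine ⟨∫ x, (-C₀ - K * ‖f₀ x‖ ^ s) ∂μ, fun u hu ↦ integral_mono
    ((integrable_const _).sub ((hf₀.integrable_norm_rpow_ofReal hsr.pos).const_mul K))
    ((hΨint u hu).sub (hinner u hu)) fun x ↦ ?_⟩
  have hlow' := hlow _ (sq_nonneg ‖u x‖)
  rw [Real.sq_rpow_half (norm_nonneg _)] at hlow'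
  have := hK _ _ (norm_nonneg (u x)) (norm_nonneg (f₀ x))
  have := real_inner_le_norm (f₀ x) (u x)
  dsimp only
  linarith

theorem isBoundedUnder_le_energy [IsFiniteMeasure μ] [Fact (1 ≤ ENNReal.ofReal r)] {C₁ : ℝ}
    (hsr : s.HolderConjugate r) (hf₀ : MemLp f₀ (ENNReal.ofReal s) μ)
    (hup : ∀ a, 0 ≤ a → Ψ a ≤ C₁ * (1 + a ^ (r / 2)))
    (hΨint : ∀ u : Ω → E, MemLp u (ENNReal.ofReal r) μ → Integrable (fun x ↦ Ψ (‖u x‖ ^ 2)) μ)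
    (hinner : ∀ u : Ω → E, MemLp u (ENNReal.ofReal r) μ → Integrable (fun x ↦ ⟪f₀ x, u x⟫) μ) :
    (𝓝 (0 : Lp E (ENNReal.ofReal r) μ)).IsBoundedUnder (· ≤ ·) fun u ↦ energy μ Ψ f₀ u := by
  obtain ⟨K, hK⟩ := Real.exists_mul_le_mul_rpow_add_mul_rpow hsr one_pos
  have hr := hsr.symm.pos
  have hconst : Integrable (fun x ↦ C₁ + K * ‖f₀ x‖ ^ s) μ :=
    (integrable_const _).add ((hf₀.integrable_norm_rpow_ofReal hsr.pos).const_mul K)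
  refine isBoundedUnder_of_eventually_le (a := ∫ x, (C₁ + K * ‖f₀ x‖ ^ s) ∂μ + |C₁ + 1|) ?_
  filter_upwards [Metric.closedBall_mem_nhds (0 : Lp E (ENNReal.ofReal r) μ) one_pos] with u hu
  rw [mem_closedBall_zero_iff] at hu
  have hur := ((Lp.memLp u).integrable_norm_rpow_ofReal hr).const_mul (C₁ + 1)
  calc energy μ Ψ f₀ u ≤ ∫ x, (C₁ + K * ‖f₀ x‖ ^ s + (C₁ + 1) * ‖u x‖ ^ r) ∂μ := by
        refine integral_mono ((hΨint u (Lp.memLp u)).sub (hinner u (Lp.memLp u)))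
          (hconst.add hur) fun x ↦ ?_
        have hup' := hup _ (sq_nonneg ‖u x‖)
        rw [Real.sq_rpow_half (norm_nonneg _)] at hup'
        have := hK _ _ (norm_nonneg (u x)) (norm_nonneg (f₀ x))
        have := neg_le_of_abs_le (abs_real_inner_le_norm (f₀ x) (u x))
        dsimp only
        linarith
    _ = ∫ x, (C₁ + K * ‖f₀ x‖ ^ s) ∂μ + (C₁ + 1) * ‖u‖ ^ r := by
        rw [integral_add hconst hur, integral_const_mul, Lp.integral_norm_rpow hr]
    _ ≤ ∫ x, (C₁ + K * ‖f₀ x‖ ^ s) ∂μ + |C₁ + 1| := by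
        gcongr
        simpa using mul_le_mul (le_abs_self (C₁ + 1))
          (Real.rpow_le_one (norm_nonneg _) hu hr.le) (by positivity) (abs_nonneg _)

theorem convexOn_energy (hΨconv : ConvexOn ℝ (Ici 0) Ψ)
    (hΨmono : MonotoneOn Ψ (Ici 0))
    (hΨint : ∀ u : Ω → E, MemLp u (ENNReal.ofReal r) μ → Integrable (fun x ↦ Ψ (‖u x‖ ^ 2)) μ)
    (hinner : ∀ u : Ω → E, MemLp u (ENNReal.ofReal r) μ → Integrable (fun x ↦ ⟪f₀ x, u x⟫) μ) :
    ConvexOn ℝ univ fun u : Lp E (ENNReal.ofReal r) μ ↦ energy μ Ψ f₀ u := by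
  have hint (u : Lp E (ENNReal.ofReal r) μ) :
      Integrable (fun x ↦ Ψ (‖u x‖ ^ 2) - ⟪f₀ x, u x⟫) μ :=
    (hΨint u (Lp.memLp u)).sub (hinner u (Lp.memLp u))
  refine ⟨convex_univ, fun v _ w _ a b ha hb hab ↦ ?_⟩
  simp only [energy, smul_eq_mul]
  rw [← integral_const_mul, ← integral_const_mul,
    ← integral_add ((hint v).const_mul a) ((hint w).const_mul b)]
  refine integral_mono_ae (hint _) (((hint v).const_mul a).add ((hint w).const_mul b)) ?_
  filter_upwards [Lp.coeFn_add (a • v) (b • w), Lp.coeFn_smul a v, Lp.coeFn_smul b w]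
    with x hadd hav hbw
  have hconv := (hΨconv.comp_norm_sq hΨmono).2 (mem_univ (v x)) (mem_univ (w x)) ha hb hab
  simp only [smul_eq_mul] at hconv
  rw [hadd, Pi.add_apply, hav, hbw, Pi.smul_apply, Pi.smul_apply, inner_add_right,
    real_inner_smul_right, real_inner_smul_right]
  linear_combination hconv

theorem energy_half_add_add_integral_le [IsFiniteMeasure μ]
    (hΨconv : ConvexOn ℝ (Ici 0) Ψ)
    (hΨint : ∀ u : Ω → E, MemLp u (ENNReal.ofReal r) μ → Integrable (fun x ↦ Ψ (‖u x‖ ^ 2)) μ)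
    (hinner : ∀ u : Ω → E, MemLp u (ENNReal.ofReal r) μ → Integrable (fun x ↦ ⟪f₀ x, u x⟫) μ)
    (v w : Lp E (ENNReal.ofReal r) μ) :
    energy μ Ψ f₀ ⇑((2⁻¹ : ℝ) • (v + w)) +
        ∫ x, (Ψ (‖((2⁻¹ : ℝ) • (v - w) : Lp E (ENNReal.ofReal r) μ) x‖ ^ 2) - Ψ 0) ∂μ ≤
      (energy μ Ψ f₀ v + energy μ Ψ f₀ w) / 2 := by
  have hint (u : Lp E (ENNReal.ofReal r) μ) :
      Integrable (fun x ↦ Ψ (‖u x‖ ^ 2) - ⟪f₀ x, u x⟫) μ :=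
    (hΨint u (Lp.memLp u)).sub (hinner u (Lp.memLp u))
  have hgain : Integrable
      (fun x ↦ Ψ (‖((2⁻¹ : ℝ) • (v - w) : Lp E (ENNReal.ofReal r) μ) x‖ ^ 2) - Ψ 0) μ :=
    (hΨint _ (Lp.memLp _)).sub (integrable_const _)
  simp only [energy]
  rw [← integral_add (hint _) hgain, ← integral_add (hint v) (hint w), ← integral_div]
  refine integral_mono_ae ((hint _).add hgain) (((hint v).add (hint w)).div_const 2) ?_
  filter_upwards [Lp.coeFn_smul (2⁻¹ : ℝ) (v + w), Lp.coeFn_add v w,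
    Lp.coeFn_smul (2⁻¹ : ℝ) (v - w), Lp.coeFn_sub v w] with x hsa ha hsd hd
  have := hΨconv.clarkson_norm_sq (v x) (w x)
  rw [hsa, hsd, Pi.smul_apply, Pi.smul_apply, ha, hd, Pi.add_apply, Pi.sub_apply,
    real_inner_smul_right, inner_add_right]
  linear_combination this

theorem exists_pos_energy_half_add_add_le [IsFiniteMeasure μ] [Fact (1 ≤ ENNReal.ofReal r)]
    {c₀ C₀ : ℝ} (hr : 0 < r) (hΨconv : ConvexOn ℝ (Ici 0) Ψ) (hΨmono : MonotoneOn Ψ (Ici 0))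
    (hΨstrict : StrictMonoOn Ψ (Ioi 0)) (hc₀ : 0 < c₀)
    (hlow : ∀ a, 0 ≤ a → c₀ * a ^ (r / 2) - C₀ ≤ Ψ a)
    (hΨint : ∀ u : Ω → E, MemLp u (ENNReal.ofReal r) μ → Integrable (fun x ↦ Ψ (‖u x‖ ^ 2)) μ)
    (hinner : ∀ u : Ω → E, MemLp u (ENNReal.ofReal r) μ → Integrable (fun x ↦ ⟪f₀ x, u x⟫) μ)
    {ε : ℝ} (hε : 0 < ε) :
    ∃ ρ > 0, ∀ v w : Lp E (ENNReal.ofReal r) μ, ε ≤ ‖v - w‖ →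
      energy μ Ψ f₀ ⇑((2⁻¹ : ℝ) • (v + w)) + ρ ≤ (energy μ Ψ f₀ v + energy μ Ψ f₀ w) / 2 := by
  obtain ⟨ρ, hρ, hgain⟩ :=
    exists_pos_le_integral_sub_map_zero (E := E) hr hΨmono hΨstrict hc₀ hlow hΨint (half_pos hε)
  refine ⟨ρ, hρ, fun v w hvw ↦ ?_⟩
  have := hgain ((2⁻¹ : ℝ) • (v - w)) (by rw [norm_smul]; norm_num; linarith)
  linarith [energy_half_add_add_integral_le hΨconv hΨint hinner v w]

end Energy

theorem stmt_10_general {Ω : Type*} [MeasurableSpace Ω] (μ : Measure Ω) [IsFiniteMeasure μ]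
    (d : ℕ) (r s : ℝ) (hr : 2 ≤ r) (hs : s = r / (r - 1))
    [Fact (1 ≤ ENNReal.ofReal r)]
    (Ψ : ℝ → ℝ)
    (hΨcont : ContinuousOn Ψ (Ici 0))
    (hΨconv : ConvexOn ℝ (Ici 0) Ψ)
    (hΨmono : MonotoneOn Ψ (Ici 0))
    (hΨstrict : StrictMonoOn Ψ (Ioi 0))
    (c₀ C₀ C₁ : ℝ) (hc₀ : 0 < c₀)
    (hlow : ∀ a : ℝ, 0 ≤ a → c₀ * a ^ (r / 2) - C₀ ≤ Ψ a)
    (hup : ∀ a : ℝ, 0 ≤ a → Ψ a ≤ C₁ * (1 + a ^ (r / 2)))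
    (uh : Ω → EuclideanSpace ℝ (Fin d)) (huh : MemLp uh (ENNReal.ofReal r) μ)
    (f₀ : Ω → EuclideanSpace ℝ (Fin d)) (hf₀ : MemLp f₀ (ENNReal.ofReal s) μ)
    (V : Submodule ℝ (Lp (EuclideanSpace ℝ (Fin d)) (ENNReal.ofReal r) μ))
    (hV : IsClosed (V : Set (Lp (EuclideanSpace ℝ (Fin d)) (ENNReal.ofReal r) μ))) :
    ∃! v : Lp (EuclideanSpace ℝ (Fin d)) (ENNReal.ofReal r) μ,
      v ∈ V ∧ ∀ w ∈ V,
        (∫ x, Ψ (‖v x + uh x‖ ^ 2) ∂μ) - (∫ x, ⟪f₀ x, v x + uh x⟫ ∂μ) ≤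
        (∫ x, Ψ (‖w x + uh x‖ ^ 2) ∂μ) - (∫ x, ⟪f₀ x, w x + uh x⟫ ∂μ) := by
  have hsr : s.HolderConjugate r := hs ▸ (Real.HolderConjugate.conjExponent (by linarith)).symm
  have hr₀ : 0 < r := hsr.symm.pos
  have hΨint (u : Ω → EuclideanSpace ℝ (Fin d)) (hu : MemLp u (ENNReal.ofReal r) μ) :=
    hu.integrable_comp_norm_sq hr₀ hΨcont hc₀.le hlow hup
  have hinner (u : Ω → EuclideanSpace ℝ (Fin d)) (hu : MemLp u (ENNReal.ofReal r) μ) :=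
    hf₀.integrable_inner hsr hu
  set U := huh.toLp uh
  have hshift (v : Lp (EuclideanSpace ℝ (Fin d)) (ENNReal.ofReal r) μ) :
      (∫ x, Ψ (‖v x + uh x‖ ^ 2) ∂μ) - (∫ x, ⟪f₀ x, v x + uh x⟫ ∂μ) = energy μ Ψ f₀ ⇑(v + U) := by
    have hvU : MemLp (fun x ↦ v x + uh x) (ENNReal.ofReal r) μ := (Lp.memLp v).add huh
    rw [← integral_sub (hΨint _ hvU) (hinner _ hvU)]
    refine integral_congr_ae ?_
    filter_upwards [Lp.coeFn_add v U, huh.coeFn_toLp] with x hadd hU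
    rw [hadd, Pi.add_apply, hU]
  simp only [hshift]
  obtain ⟨C, hC⟩ := exists_le_energy hsr hf₀ hc₀ hlow hΨint hinner
  have hcont := (convexOn_energy hΨconv hΨmono hΨint hinner).continuous_of_isBoundedUnder
    (isBoundedUnder_le_energy hsr hf₀ hup hΨint hinner)
  refine existsUnique_forall_le_of_uniform_midpoint hV V.convex ⟨0, V.zero_mem⟩
    (hcont.comp (continuous_add_const U)).continuousOn
    ⟨C, forall_mem_image.2 fun v _ ↦ hC _ (Lp.memLp _)⟩ fun ε hε ↦ ?_
  obtain ⟨ρ, hρ, hmid⟩ := exists_pos_energy_half_add_add_le hr₀ hΨconv hΨmono hΨstrict hc₀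
    hlow hΨint hinner hε
  refine ⟨ρ, hρ, fun v _ w _ hvw ↦ ?_⟩
  have := hmid (v + U) (w + U) (by rwa [add_sub_add_right_eq_sub])
  rwa [show (2⁻¹ : ℝ) • (v + U + (w + U)) = (2⁻¹ : ℝ) • (v + w) + U by module] at this

/-- convex-case existence and uniqueness (Theorem 4.6 of the
paper): the energy E(v) = ∫ Ψ(‖v + û‖²) dμ − ∫ f₀·(v + û) dμ admits a unique
global minimizer on a closed linear subspace V of Lʳ(μ; ℝᵈ). -/
theorem stmt_10 {Ω : Type*} [MeasurableSpace Ω] (μ : Measure Ω) [IsFiniteMeasure μ]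
    (hμ : μ univ ≠ 0)
    (d : ℕ) (hd : 1 ≤ d) (r s : ℝ) (hr : 2 ≤ r) (hs : s = r / (r - 1))
    [Fact (1 ≤ ENNReal.ofReal r)]
    (Ψ : ℝ → ℝ)
    (hΨcont : ContinuousOn Ψ (Ici 0))
    (hΨconv : ConvexOn ℝ (Ici 0) Ψ)
    (hΨmono : MonotoneOn Ψ (Ici 0))
    (hΨstrict : StrictMonoOn Ψ (Ioi 0))
    (c₀ C₀ C₁ : ℝ) (hc₀ : 0 < c₀) (hC₀ : 0 < C₀) (hC₁ : 0 < C₁)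
    (hlow : ∀ a : ℝ, 0 ≤ a → c₀ * a ^ (r / 2) - C₀ ≤ Ψ a)
    (hup : ∀ a : ℝ, 0 ≤ a → Ψ a ≤ C₁ * (1 + a ^ (r / 2)))
    (uh : Ω → EuclideanSpace ℝ (Fin d)) (huh : MemLp uh (ENNReal.ofReal r) μ)
    (f₀ : Ω → EuclideanSpace ℝ (Fin d)) (hf₀ : MemLp f₀ (ENNReal.ofReal s) μ)
    (V : Submodule ℝ (Lp (EuclideanSpace ℝ (Fin d)) (ENNReal.ofReal r) μ))
    (hV : IsClosed (V : Set (Lp (EuclideanSpace ℝ (Fin d)) (ENNReal.ofReal r) μ))) :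
    ∃! v : Lp (EuclideanSpace ℝ (Fin d)) (ENNReal.ofReal r) μ,
      v ∈ V ∧ ∀ w ∈ V,
        (∫ x, Ψ (‖v x + uh x‖ ^ 2) ∂μ) - (∫ x, ⟪f₀ x, v x + uh x⟫ ∂μ) ≤
        (∫ x, Ψ (‖w x + uh x‖ ^ 2) ∂μ) - (∫ x, ⟪f₀ x, w x + uh x⟫ ∂μ) :=
  stmt_10_general μ d r s hr hs Ψ hΨcont hΨconv hΨmono hΨstrict c₀ C₀ C₁ hc₀ hlow hup uh huh f₀ hf₀
    V hV
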